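/- For all natural numbers h ≤ k: (a) R(ψ(k−h,k)) · ψ(h,k) = k · ψ(0,k), i.e., the reversal of ψ(k−h,k) concatenated with ψ(h,k) equals the word ψ(0,k) prepended with the letter k; (b) the word obtained from ψ(0,k) by deleting its last letter is a palindrome. -/
import Mathlib


/-- S⁻¹: move the last letter of a nonempty word to the front. -/
def sInv (w : List ℕ) : List ℕ := w.rotate (w.length - 1)

/-- Apply a substitution `f` letterwise to a word (the morphism determined by `f`). -/
def applyM (f : ℕ → List ℕ) (w : List ℕ) : List ℕ := (w.map f).flatten

/-- Fuel-indexed approximation of the morphism φ: `phiAux n` agrees with φ on all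
letters `c < n`.  (Computing φ^c(00) only uses φ on letters smaller than `c`, so the
recursion is well-founded in the fuel.) -/
def phiAux : ℕ → ℕ → List ℕ
  | 0, _ => []
  | n + 1, c => sInv ((applyM (phiAux n))^[c] [0, 0]) ++ [c + 1]

/-- The morphism φ on letters: φ(h) = S⁻¹(φ^h(00))·(h+1).
In particular φ(0) = 001 and φ(1) = 1001002. -/
def phi (c : ℕ) : List ℕ := phiAux (c + 1) c

/-- The morphism φ on words. -/
def phiW (w : List ℕ) : List ℕ := applyM phi w

/-- ψ(h,k) = φ^(k−h)(h). -/
def psi (h k : ℕ) : List ℕ := phiW^[k - h] [h]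

lemma mem_applyM {g : ℕ → List ℕ} {x : ℕ} {w : List ℕ} :
    x ∈ applyM g w ↔ ∃ y ∈ w, x ∈ g y := by
  simp [applyM]

lemma applyM_append (g : ℕ → List ℕ) (a b : List ℕ) :
    applyM g (a ++ b) = applyM g a ++ applyM g b := by
  simp [applyM]

lemma sInv_concat (w : List ℕ) (x : ℕ) : sInv (w ++ [x]) = x :: w := by
  simp [sInv, List.rotate_eq_drop_append_take (by simp : w.length + 1 - 1 ≤ (w ++ [x]).length)]

lemma applyM_bound_iter (g : ℕ → List ℕ) (hg : ∀ c, ∀ x ∈ g c, x ≤ c + 1) :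
    ∀ (j : ℕ) (w : List ℕ) (m : ℕ), (∀ x ∈ w, x ≤ m) → ∀ x ∈ (applyM g)^[j] w, x ≤ m + j := by
  intro j
  induction j with
  | zero => intro w m hw x hx; simpa using hw x hx
  | succ j ih =>
    intro w m hw x hx
    rw [Function.iterate_succ_apply] at hx
    have h1 : ∀ y ∈ applyM g w, y ≤ m + 1 := by
      intro y hy
      obtain ⟨z, hz, hyz⟩ := mem_applyM.mp hy
      exact le_trans (hg z y hyz) (by have := hw z hz; omega)
    have := ih (applyM g w) (m+1) h1 x hx
    omega

lemma phiAux_letter_bound : ∀ (n c : ℕ), ∀ x ∈ phiAux n c, x ≤ c + 1 := by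
  intro n
  induction n with
  | zero => intro c x hx; simp [phiAux] at hx
  | succ n ih =>
    intro c x hx
    simp only [phiAux, List.mem_append, List.mem_singleton] at hx
    rcases hx with hx | rfl
    · have hx' : x ∈ (applyM (phiAux n))^[c] [0,0] := by
        simpa [sInv] using hx
      have := applyM_bound_iter (phiAux n) ih c [0,0] 0 (by simp) x hx'
      omega
    · omega

lemma phi_letter_bound : ∀ (c : ℕ), ∀ x ∈ phi c, x ≤ c + 1 := fun c => phiAux_letter_bound (c+1) c

lemma phiW_eq : phiW = applyM phi := rfl

lemma phiW_iter_bound (j : ℕ) : ∀ x ∈ phiW^[j] [0,0], x ≤ j := by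
  intro x hx
  rw [phiW_eq] at hx
  simpa using applyM_bound_iter phi phi_letter_bound j [0,0] 0 (by simp) x hx

/-- Key agreement: enough fuel computes the same iterates. -/
lemma key_agree : ∀ c, ∀ j ≤ c, ∀ a, c ≤ a → (applyM (phiAux a))^[j] [0,0] = phiW^[j] [0,0] := by
  intro c
  induction c using Nat.strong_induction_on with
  | _ c IH =>
    have agree : ∀ x, x < c → ∀ a, x < a → phiAux a x = phi x := by
      intro x hx a ha
      obtain ⟨b, rfl⟩ : ∃ b, a = b + 1 := ⟨a - 1, by omega⟩
      show sInv ((applyM (phiAux b))^[x] [0,0]) ++ [x+1] = phi x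
      rw [IH x hx x le_rfl b (by omega)]
      show _ = sInv ((applyM (phiAux x))^[x] [0,0]) ++ [x+1]
      rw [IH x hx x le_rfl x le_rfl]
    intro j
    induction j with
    | zero => intro _ a _; rfl
    | succ j ihj =>
      intro hj a ha
      rw [Function.iterate_succ_apply', Function.iterate_succ_apply',
        ihj (by omega) a ha]
      show applyM (phiAux a) _ = applyM phi _
      unfold applyM
      congr 1
      apply List.map_congr_left
      intro x hx
      have hxj := phiW_iter_bound j x hx
      exact agree x (by omega) a (by omega)

lemma phi_eq (c : ℕ) : phi c = sInv (phiW^[c] [0,0]) ++ [c+1] := by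
  show sInv ((applyM (phiAux c))^[c] [0,0]) ++ [c+1] = _
  rw [key_agree c c le_rfl c le_rfl]

lemma phiW_append (a b : List ℕ) : phiW (a ++ b) = phiW a ++ phiW b :=
  applyM_append phi a b

lemma iter_phiW_append (n : ℕ) (a b : List ℕ) :
    phiW^[n] (a ++ b) = phiW^[n] a ++ phiW^[n] b := by
  induction n generalizing a b with
  | zero => rfl
  | succ n ih => rw [Function.iterate_succ_apply, Function.iterate_succ_apply,
      Function.iterate_succ_apply, phiW_append, ih]

/-- ψ words end with the letter `h + n`. -/
lemma ends_with (h : ℕ) : ∀ n : ℕ, ∃ w, phiW^[n] [h] = w ++ [h + n] := by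
  intro n
  induction n with
  | zero => exact ⟨[], rfl⟩
  | succ n ih =>
    obtain ⟨w, hw⟩ := ih
    refine ⟨phiW w ++ sInv (phiW^[h+n] [0,0]), ?_⟩
    rw [Function.iterate_succ_apply', hw, phiW_append]
    have : phiW [h+n] = phi (h+n) := by simp [phiW, applyM]
    rw [this, phi_eq, List.append_assoc]
    rfl

lemma psi_ends (h k : ℕ) (hk : h ≤ k) : psi h k = (psi h k).dropLast ++ [k] := by
  obtain ⟨w, hw⟩ := ends_with h (k - h)
  have : h + (k - h) = k := by omega
  rw [this] at hw
  show psi h k = _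
  rw [psi, hw, List.dropLast_concat]

lemma psi_succ_iter (a m : ℕ) (ha : a ≤ m) : psi a (m+1) = phiW^[m-a] (phi a) := by
  show phiW^[m+1-a] [a] = _
  have h : m+1-a = (m-a)+1 := by omega
  rw [h, Function.iterate_succ_apply]
  congr 1
  simp [phiW, applyM]

lemma phi_decomp (a : ℕ) :
    phi a = [a] ++ ((psi 0 a).dropLast ++ ([a] ++ ((psi 0 a).dropLast ++ [a+1]))) := by
  rw [phi_eq]
  have h00 : phiW^[a] ([0,0] : List ℕ) = psi 0 a ++ psi 0 a := by
    have : ([0,0] : List ℕ) = [0] ++ [0] := rfl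
    rw [this, iter_phiW_append]; rfl
  rw [h00]
  have hu : psi 0 a = (psi 0 a).dropLast ++ [a] := psi_ends 0 a (Nat.zero_le a)
  set u := (psi 0 a).dropLast with hudef
  rw [hu]
  have : (u ++ [a]) ++ (u ++ [a]) = ((u ++ [a]) ++ u) ++ [a] := by simp
  rw [this, sInv_concat]
  simp

lemma decomp (m a : ℕ) (ha : a ≤ m)
    (Hm : ∀ h ≤ m, (psi (m-h) m).reverse ++ psi h m = m :: psi 0 m) :
    psi a (m+1) = psi a m ++ (psi (m-a) m).dropLast.reverse ++ psi a m ++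
      (psi (m-a) m).dropLast.reverse ++ psi (a+1) (m+1) := by
  set Y := (psi (m-a) m).dropLast.reverse with hY
  have h3 : phiW^[m-a] [a] = psi a m := rfl
  have h4 : phiW^[m-a] [a+1] = psi (a+1) (m+1) := by
    show _ = phiW^[m+1-(a+1)] [a+1]
    congr 1; omega
  have h5 : phiW^[m-a] ((psi 0 a).dropLast) = Y := by
    have e1 : phiW^[m-a] ((psi 0 a).dropLast) ++ psi a m = psi 0 m := by
      rw [← h3, ← iter_phiW_append, ← psi_ends 0 a (Nat.zero_le a)]
      show phiW^[m-a] (phiW^[a] [0]) = psi 0 m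
      rw [← Function.iterate_add_apply]
      show phiW^[m-a+a] [0] = phiW^[m-0] [0]
      congr 1; omega
    have h6 := Hm a ha
    have h7 := psi_ends (m-a) m (by omega)
    have h8 : (psi (m-a) m).reverse = m :: Y := by
      conv_lhs => rw [h7]
      simp [hY]
    rw [h8] at h6
    simp only [List.cons_append, List.cons.injEq] at h6
    have e2 : psi 0 m = Y ++ psi a m := h6.2.symm
    exact List.append_cancel_right (e1.trans e2)
  rw [psi_succ_iter a m ha, phi_decomp a,
    iter_phiW_append, iter_phiW_append, iter_phiW_append, iter_phiW_append,
    h3, h4, h5]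
  simp [List.append_assoc]

lemma main_a : ∀ k h, h ≤ k → (psi (k-h) k).reverse ++ psi h k = k :: psi 0 k := by
  intro k
  induction k using Nat.strong_induction_on with
  | _ k IH =>
    match k with
    | 0 =>
      intro h hh
      have : h = 0 := by omega
      subst this
      rfl
    | m+1 =>
      intro h
      induction h with
      | zero =>
        intro _
        have hs : psi (m+1) (m+1) = [m+1] := by
          show phiW^[m+1-(m+1)] [m+1] = _
          rw [Nat.sub_self]
          exact Function.iterate_zero_apply _ _
        rw [Nat.sub_zero, hs]
        rfl
      | succ h ihh =>
        intro hh
        have hhm : h ≤ m := by omega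
        have Hm : ∀ a ≤ m, (psi (m-a) m).reverse ++ psi a m = m :: psi 0 m :=
          fun a ha' => IH m (Nat.lt_succ_self m) a ha'
        set g := m - h with hgdef
        have hg : g ≤ m := by omega
        have e1 : m+1-(h+1) = g := by omega
        have e2 : m+1-h = g+1 := by omega
        have e3 : m-g = h := by omega
        have ihh' := ihh (by omega)
        rw [e2] at ihh'
        have Dh := decomp m h hhm Hm
        have Dg := decomp m g hg Hm
        rw [e3] at Dg
        rw [e1, Dg]
        rw [Dh] at ihh'
        rw [← ihh']
        obtain ⟨p, hp⟩ : ∃ p, psi h m = p ++ [m] := ⟨_, psi_ends h m hhm⟩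
        obtain ⟨q, hq⟩ : ∃ q, psi g m = q ++ [m] := ⟨_, psi_ends g m hg⟩
        rw [hp, hq]
        simp [List.reverse_append, List.append_assoc]

/-- For h ≤ k: (a) R(ψ(k−h,k))·ψ(h,k) = k·ψ(0,k); (b) ψ(0,k) with its last letter
removed is a palindrome. -/
theorem psi_symmetry (h k : ℕ) (hhk : h ≤ k) :
    (psi (k - h) k).reverse ++ psi h k = k :: psi 0 k ∧
    (psi 0 k).dropLast.reverse = (psi 0 k).dropLast := by
  refine ⟨main_a k h hhk, ?_⟩
  have hkk := main_a k k le_rfl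
  rw [Nat.sub_self] at hkk
  have hk0 : psi k k = [k] := by
    show phiW^[k-k] [k] = _
    rw [Nat.sub_self]
    exact Function.iterate_zero_apply _ _
  obtain ⟨u, hu⟩ : ∃ u, psi 0 k = u ++ [k] := ⟨_, psi_ends 0 k (Nat.zero_le k)⟩
  rw [hk0, hu] at hkk
  rw [hu, List.dropLast_concat]
  simp [List.reverse_append] at hkk
  exact hkk
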